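/- Let G be a finite solvable group and N a normal subgroup of G with |G:N| = n and kpp_G(N) = k. Then |N| ≤ ∏_{i=0}^{nk-1} (nk-i)^(2^i). -/

import Mathlib

/-!
Write `F r = ∏_{i<r} (r-i)^(2^i)`, so that `F (r+1) = (r+1) F(r)²`. For a solvable group `G` one
shows `|G| ≤ F (kpp(G))` by induction on `|G|`: take a nontrivial normal subgroup `M` that is
abelian of exponent `p`. Every prime-power element of `G/M` lifts to a prime-power element of `G`,
so the `kpp(G/M)` classes of `G/M` pull back to distinct classes of `G` outside the `t` classes
of nontrivial elements of `M`; hence `kpp(G/M) + t ≤ kpp(G)`. As `M` is abelian, each of these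
`t` classes has at most `|G:M|` elements, so `|M| ≤ t |G:M| + 1`, and
`|G| ≤ F(c)(t F(c) + 1) ≤ F(c + t)` with `c = kpp(G/M)`.
For `N ⊴ G`, each `G`-class in `N` splits into at most `|G:N|` classes of `N`, so
`kpp(N) ≤ |G:N| kpp_G(N)`, and the bound for `N` follows.
-/

open Subgroup

def kppBound (r : ℕ) : ℕ := ∏ i ∈ Finset.range r, (r - i) ^ 2 ^ i

lemma kppBound_succ (r : ℕ) : kppBound (r + 1) = (r + 1) * kppBound r ^ 2 := by
  rw [kppBound, kppBound, Finset.prod_range_succ', ← Finset.prod_pow, mul_comm]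
  congr 1
  · simp
  · refine Finset.prod_congr rfl fun i hi => ?_
    rw [Finset.mem_range] at hi
    rw [show r + 1 - (i + 1) = r - i by omega, pow_succ, pow_mul]

lemma kppBound_pos (r : ℕ) : 0 < kppBound r :=
  Finset.prod_pos fun _ hi => pow_pos (Nat.sub_pos_of_lt (Finset.mem_range.1 hi)) _

lemma kppBound_mono : Monotone kppBound := by
  refine monotone_nat_of_le_succ fun r => ?_
  have := kppBound_pos r
  rw [kppBound_succ]
  nlinarith

lemma mul_mul_add_one_le_kppBound {a c t : ℕ} (ha : a ≤ kppBound c) (hc : 1 ≤ c) (ht : 1 ≤ t) :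
    a * (t * a + 1) ≤ kppBound (c + t) := by
  obtain ⟨s, rfl⟩ : ∃ s, t = s + 1 := ⟨t - 1, by omega⟩
  have hmono : kppBound c ≤ kppBound (c + s) := kppBound_mono (by omega)
  have : a ≤ a * a := Nat.le_mul_self a
  calc a * ((s + 1) * a + 1) ≤ (c + s + 1) * a ^ 2 := by nlinarith
    _ ≤ (c + s + 1) * kppBound (c + s) ^ 2 := by gcongr; omega
    _ = kppBound (c + (s + 1)) := (kppBound_succ _).symm

lemma Set.ncard_le_mul_ncard_image {α β : Type*} {s : Set α} (hs : s.Finite) (f : α → β)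
    {n : ℕ} (h : ∀ b ∈ f '' s, (s ∩ f ⁻¹' {b}).ncard ≤ n) : s.ncard ≤ n * (f '' s).ncard := by
  classical
  rw [Set.ncard_eq_toFinset_card s hs, Set.ncard_eq_toFinset_card _ (hs.image f),
    Set.Finite.toFinset_image]
  refine Finset.card_le_mul_card_image _ n fun b hb => ?_
  rw [Finset.mem_image] at hb
  obtain ⟨a, ha, rfl⟩ := hb
  convert h (f a) ⟨a, by simpa using ha, rfl⟩ using 1
  rw [Set.ncard_eq_toFinset_card _ (hs.inter_of_left _)]
  congr 1
  ext
  simp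

section

variable {G : Type*} [Group G]

def HasPrimePowerOrder {M : Type*} [Monoid M] (x : M) : Prop :=
  ∃ p m : ℕ, p.Prime ∧ orderOf x = p ^ m

def primePowerOrderClasses (M : Type*) [Monoid M] : Set (ConjClasses M) :=
  ConjClasses.mk '' {x | HasPrimePowerOrder x}

lemma hasPrimePowerOrder_one {M : Type*} [Monoid M] : HasPrimePowerOrder (1 : M) :=
  ⟨2, 0, Nat.prime_two, by simp⟩

lemma hasPrimePowerOrder_of_pow_eq_one {M : Type*} [Monoid M] {x : M} {p : ℕ} (hp : p.Prime)
    (m : ℕ) (h : x ^ p ^ m = 1) : HasPrimePowerOrder x := by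
  obtain ⟨i, -, hi⟩ := (Nat.dvd_prime_pow hp).1 (orderOf_dvd_of_pow_eq_one h)
  exact ⟨p, i, hp, hi⟩

lemma exists_hasPrimePowerOrder_mk_eq {M : Subgroup G} [M.Normal] {p : ℕ} (hp : p.Prime)
    (hM : ∀ x ∈ M, x ^ p = 1) {y : G ⧸ M} (hy : HasPrimePowerOrder y) :
    ∃ z : G, HasPrimePowerOrder z ∧ (z : G ⧸ M) = y := by
  obtain ⟨q, m, hq, hy⟩ := hy
  obtain ⟨x, rfl⟩ := QuotientGroup.mk_surjective y
  have hx : x ^ (q ^ m * p) = 1 := by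
    rw [pow_mul]
    apply hM
    rw [← QuotientGroup.eq_one_iff, QuotientGroup.mk_pow, ← hy, pow_orderOf_eq_one]
  by_cases hqp : q = p
  · subst hqp
    exact ⟨x, hasPrimePowerOrder_of_pow_eq_one hq (m + 1) (by rwa [pow_succ]), rfl⟩
  -- `x ^ p` has `q`-power order, and its image still generates `⟨y⟩` since `p` is prime to `q`.
  have hcop : p.Coprime (orderOf (x : G ⧸ M)) := by
    rw [hy]
    exact Nat.Coprime.pow_right _ ((Nat.coprime_primes hp hq).2 (Ne.symm hqp))
  obtain ⟨e, he⟩ := exists_pow_eq_self_of_coprime hcop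
  refine ⟨(x ^ p) ^ e, hasPrimePowerOrder_of_pow_eq_one hq m ?_, by simpa using he⟩
  rw [← pow_mul, ← pow_mul, show p * (e * q ^ m) = q ^ m * p * e by ring, pow_mul, hx, one_pow]

lemma Subgroup.ncard_range_le_index {α : Type*} (H : Subgroup G) [H.FiniteIndex] {f : G → α}
    (hf : ∀ g, ∀ h ∈ H, f (g * h) = f g) : (Set.range f).ncard ≤ H.index := by
  let F : G ⧸ H → α := Quotient.lift f fun a b hab => by
    rw [← hf a _ (QuotientGroup.leftRel_apply.1 hab), mul_inv_cancel_left]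
  have hF : Set.range f = Set.range F := QuotientGroup.mk_surjective.range_comp F
  rw [hF, ← Nat.card_coe_set_eq]
  exact Finite.card_range_le F

lemma ConjClasses.carrier_mk (x : G) :
    (ConjClasses.mk x).carrier = Set.range (fun g => g * x * g⁻¹) := by
  ext y
  exact isConj_iff

lemma ConjClasses.ncard_carrier_le_index (H : Subgroup G) [H.FiniteIndex] {x : G}
    (hx : x ∈ centralizer H) :
    (ConjClasses.mk x).carrier.ncard ≤ H.index := by
  rw [ConjClasses.carrier_mk]
  refine H.ncard_range_le_index fun g h hh => ?_
  rw [mul_inv_rev, mul_assoc g, mul_assoc g, mem_centralizer_iff.1 hx h hh]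
  group

lemma ConjClasses.ncard_fiber_map_subtype_le_index [Finite G] (N : Subgroup G) [N.Normal]
    (x : N) : {d : ConjClasses N | ConjClasses.map N.subtype d = ConjClasses.mk (x : G)}.ncard ≤
      N.index := by
  refine (Set.ncard_le_ncard ?_ (Set.toFinite _)).trans
    (N.ncard_range_le_index (f := fun g => ConjClasses.mk (MulAut.conjNormal g x)) ?_)
  · intro d hd
    obtain ⟨y, rfl⟩ := ConjClasses.mk_surjective d
    obtain ⟨g, hg⟩ := isConj_iff.1 (ConjClasses.mk_eq_mk_iff_isConj.1 hd)
    refine ⟨g⁻¹, congrArg ConjClasses.mk (Subtype.ext ?_)⟩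
    rw [MulAut.conjNormal_apply, ← hg, Subgroup.subtype_apply]
    group
  · intro g h hh
    refine ConjClasses.mk_eq_mk_iff_isConj.2 ?_
    rw [map_mul, MulAut.mul_apply]
    have hx : IsConj x (MulAut.conjNormal h x) := isConj_iff.2 ⟨⟨h, hh⟩, rfl⟩
    exact ((MulAut.conjNormal g).toMonoidHom.map_isConj hx).symm

lemma ncard_primePowerOrderClasses_le_index_mul [Finite G] (N : Subgroup G) [N.Normal] :
    (primePowerOrderClasses N).ncard ≤
      N.index * (ConjClasses.mk '' {x : G | x ∈ N ∧ HasPrimePowerOrder x}).ncard := by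
  have himage : ConjClasses.map N.subtype '' primePowerOrderClasses N ⊆
      ConjClasses.mk '' {x : G | x ∈ N ∧ HasPrimePowerOrder x} := by
    rintro _ ⟨_, ⟨y, hy, rfl⟩, rfl⟩
    exact ⟨y, ⟨y.2, by rwa [HasPrimePowerOrder, Subgroup.orderOf_coe]⟩, rfl⟩
  refine (Set.ncard_le_mul_ncard_image (Set.toFinite _) (ConjClasses.map N.subtype) ?_).trans
    (Nat.mul_le_mul_left _ (Set.ncard_le_ncard himage (Set.toFinite _)))
  rintro _ ⟨_, ⟨y, -, rfl⟩, rfl⟩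
  exact (Set.ncard_le_ncard Set.inter_subset_right (Set.toFinite _)).trans
    (ConjClasses.ncard_fiber_map_subtype_le_index N y)

lemma ConjClasses.carrier_injective : Function.Injective (@ConjClasses.carrier G _) := by
  intro a b h
  obtain ⟨x, rfl⟩ := ConjClasses.mk_surjective a
  rw [← ConjClasses.mem_carrier_iff_mk_eq, ← h]
  exact ConjClasses.mem_carrier_mk

lemma ncard_setOf_conjugatesOf_eq (P : G → Prop) :
    {C : Set G | ∃ x, P x ∧ C = conjugatesOf x}.ncard = (ConjClasses.mk '' {x | P x}).ncard := by
  rw [← Set.ncard_image_of_injective _ ConjClasses.carrier_injective, Set.image_image]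
  congr 1
  ext C
  exact exists_congr fun x => and_congr Iff.rfl eq_comm

lemma exists_normal_ne_bot_le_centralizer [Group.IsSolvable G] [Nontrivial G] :
    ∃ A : Subgroup G, A.Normal ∧ A ≠ ⊥ ∧ A ≤ centralizer A := by
  classical
  have hex : ∃ n, derivedSeries G n = ⊥ := Group.IsSolvable.solvable
  obtain ⟨n, hn⟩ : ∃ n, Nat.find hex = n + 1 := by
    refine Nat.exists_eq_add_one.2 (Nat.pos_of_ne_zero fun h => ?_)
    have h0 := Nat.find_spec hex
    rw [h, derivedSeries_zero] at h0
    exact top_ne_bot h0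
  refine ⟨derivedSeries G n, derivedSeries_normal G n, Nat.find_min hex (by omega), ?_⟩
  rw [← commutator_eq_bot_iff_le_centralizer, ← derivedSeries_succ, ← hn]
  exact Nat.find_spec hex

def Subgroup.powEqOne (A : Subgroup G) (hA : A ≤ centralizer A) (n : ℕ) : Subgroup G where
  carrier := {g | g ∈ A ∧ g ^ n = 1}
  one_mem' := ⟨A.one_mem, one_pow n⟩
  mul_mem' := by
    rintro x y ⟨hxA, hx⟩ ⟨hyA, hy⟩
    refine ⟨A.mul_mem hxA hyA, ?_⟩
    rw [Commute.mul_pow (mem_centralizer_iff.1 (hA hyA) x hxA), hx, hy, one_mul]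
  inv_mem' := by
    rintro x ⟨hxA, hx⟩
    exact ⟨A.inv_mem hxA, by rw [inv_pow, hx, inv_one]⟩

lemma Subgroup.mem_powEqOne {A : Subgroup G} {hA : A ≤ centralizer A} {n : ℕ} {g : G} :
    g ∈ A.powEqOne hA n ↔ g ∈ A ∧ g ^ n = 1 := Iff.rfl

instance Subgroup.powEqOne_normal (A : Subgroup G) [A.Normal] (hA : A ≤ centralizer A) (n : ℕ) :
    (A.powEqOne hA n).Normal where
  conj_mem x hx g := by
    obtain ⟨hxA, hx⟩ := mem_powEqOne.1 hx
    exact ⟨‹A.Normal›.conj_mem x hxA g, by rw [conj_pow, hx, mul_one, mul_inv_cancel]⟩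

lemma exists_normal_ne_bot_le_centralizer_pow_prime_eq_one [Finite G] [Group.IsSolvable G]
    [Nontrivial G] : ∃ p : ℕ, p.Prime ∧ ∃ M : Subgroup G, M.Normal ∧ M ≠ ⊥ ∧
      M ≤ centralizer M ∧ ∀ x ∈ M, x ^ p = 1 := by
  obtain ⟨A, hAn, hA, hAc⟩ := exists_normal_ne_bot_le_centralizer (G := G)
  have hp : (Nat.card A).minFac.Prime :=
    Nat.minFac_prime ((Subgroup.one_lt_card_iff_ne_bot A).2 hA).ne'
  have := Fact.mk hp
  obtain ⟨x, hx⟩ := exists_prime_orderOf_dvd_card' _ (Nat.minFac_dvd (Nat.card A))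
  have hxM : (x : G) ∈ A.powEqOne hAc (Nat.card A).minFac :=
    ⟨x.2, by rw [← hx, ← Subgroup.orderOf_coe, pow_orderOf_eq_one]⟩
  refine ⟨_, hp, A.powEqOne hAc _, inferInstance, fun hbot => ?_,
    fun y hy z hz => hAc hy.1 z hz.1, fun y hy => hy.2⟩
  rw [hbot, mem_bot] at hxM
  rw [← Subgroup.orderOf_coe, hxM, orderOf_one] at hx
  exact hp.one_lt.ne hx

lemma ncard_primePowerOrderClasses_quotient_add_le [Finite G] {M : Subgroup G} [M.Normal]
    {p : ℕ} (hp : p.Prime) (hM : ∀ x ∈ M, x ^ p = 1) :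
    (primePowerOrderClasses (G ⧸ M)).ncard + (ConjClasses.mk '' ((M : Set G) \ {1})).ncard ≤
      (primePowerOrderClasses G).ncard := by
  set T := ConjClasses.mk '' ((M : Set G) \ {1})
  have hT : T ⊆ primePowerOrderClasses G := by
    rintro _ ⟨x, ⟨hxM, hx1⟩, rfl⟩
    exact ⟨x, hasPrimePowerOrder_of_pow_eq_one hp 1 (by rw [pow_one]; exact hM x hxM), rfl⟩
  -- Lift `1` to `1`; any other lift lies outside `M`, so its class is not in `T`.
  have hcover : primePowerOrderClasses (G ⧸ M) ⊆
      ConjClasses.map (QuotientGroup.mk' M) '' (primePowerOrderClasses G \ T) := by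
    rintro _ ⟨y, hy, rfl⟩
    obtain ⟨z, hz, hzM, rfl⟩ : ∃ z : G, HasPrimePowerOrder z ∧ (z ∈ M → z = 1) ∧
        (z : G ⧸ M) = y := by
      by_cases hy1 : y = 1
      · exact ⟨1, hasPrimePowerOrder_one, fun _ => rfl, hy1.symm⟩
      obtain ⟨z, hz, rfl⟩ := exists_hasPrimePowerOrder_mk_eq hp hM hy
      exact ⟨z, hz, fun h => absurd ((QuotientGroup.eq_one_iff z).2 h) hy1, rfl⟩
    refine ⟨ConjClasses.mk z, ⟨⟨z, hz, rfl⟩, ?_⟩, rfl⟩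
    rintro ⟨w, ⟨hwM, hw1⟩, hwz⟩
    obtain ⟨g, rfl⟩ := isConj_iff.1 (ConjClasses.mk_eq_mk_iff_isConj.1 hwz)
    exact hw1 (conj_eq_one_iff.1 (hzM (‹M.Normal›.conj_mem w hwM g)))
  have hcount := (Set.ncard_le_ncard hcover (Set.toFinite _)).trans
    (Set.ncard_image_le (Set.toFinite _))
  rw [Set.ncard_sdiff hT] at hcount
  have := Set.ncard_le_ncard hT (Set.toFinite _)
  omega

lemma card_le_ncard_mul_index_add_one [Finite G] {M : Subgroup G} (hM : M ≤ centralizer M) :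
    Nat.card M ≤ (ConjClasses.mk '' ((M : Set G) \ {1})).ncard * M.index + 1 := by
  have hfiber : ((M : Set G) \ {1}).ncard ≤
      M.index * (ConjClasses.mk '' ((M : Set G) \ {1})).ncard := by
    refine Set.ncard_le_mul_ncard_image (Set.toFinite _) _ ?_
    rintro _ ⟨x, ⟨hxM, -⟩, rfl⟩
    rw [← ConjClasses.carrier_eq_preimage_mk]
    exact (Set.ncard_le_ncard Set.inter_subset_right (Set.toFinite _)).trans
      (ConjClasses.ncard_carrier_le_index M (hM hxM))
  rw [← SetLike.coe_sort_coe, Nat.card_coe_set_eq, ← Set.ncard_sdiff_singleton_add_one M.one_mem,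
    mul_comm]
  omega

lemma card_le_kppBound_of_quotient [Finite G] {M : Subgroup G} [M.Normal] {p : ℕ}
    (hp : p.Prime) (hM : ∀ x ∈ M, x ^ p = 1) (hMc : M ≤ centralizer M) (hM1 : M ≠ ⊥)
    (hQ : Nat.card (G ⧸ M) ≤ kppBound (primePowerOrderClasses (G ⧸ M)).ncard) :
    Nat.card G ≤ kppBound (primePowerOrderClasses G).ncard := by
  have hcard := card_le_ncard_mul_index_add_one hMc
  set c := (primePowerOrderClasses (G ⧸ M)).ncard
  set t := (ConjClasses.mk '' ((M : Set G) \ {1})).ncard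
  have hc : 1 ≤ c := (Set.ncard_pos (Set.toFinite _)).2 ⟨_, 1, hasPrimePowerOrder_one, rfl⟩
  have ht : 1 ≤ t := by
    by_contra! ht0
    have := (Subgroup.one_lt_card_iff_ne_bot M).2 hM1
    rw [Nat.lt_one_iff.1 ht0, zero_mul] at hcard
    omega
  calc Nat.card G = Nat.card (G ⧸ M) * Nat.card M := M.card_eq_card_quotient_mul_card_subgroup
    _ ≤ Nat.card (G ⧸ M) * (t * Nat.card (G ⧸ M) + 1) := Nat.mul_le_mul_left _ hcard
    _ ≤ kppBound (c + t) := mul_mul_add_one_le_kppBound hQ hc ht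
    _ ≤ kppBound (primePowerOrderClasses G).ncard :=
      kppBound_mono (ncard_primePowerOrderClasses_quotient_add_le hp hM)

lemma Subgroup.card_quotient_lt [Finite G] {M : Subgroup G} (hM : M ≠ ⊥) :
    Nat.card (G ⧸ M) < Nat.card G := by
  rw [M.card_eq_card_quotient_mul_card_subgroup]
  exact lt_mul_of_one_lt_right Nat.card_pos ((one_lt_card_iff_ne_bot M).2 hM)

end

theorem card_le_kppBound (G : Type*) [Group G] [Finite G] [Group.IsSolvable G] :
    Nat.card G ≤ kppBound (primePowerOrderClasses G).ncard := by
  induction h : Nat.card G using Nat.strong_induction_on generalizing G with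
  | _ n ih =>
  subst h
  rcases subsingleton_or_nontrivial G with hG | hG
  · rw [Nat.card_of_subsingleton (1 : G)]
    exact kppBound_pos _
  obtain ⟨p, hp, M, hMn, hM1, hMc, hM⟩ :=
    exists_normal_ne_bot_le_centralizer_pow_prime_eq_one (G := G)
  exact card_le_kppBound_of_quotient hp hM hMc hM1 (ih _ (card_quotient_lt hM1) (G ⧸ M) rfl)

/-- **Corollary 4.9, bound for `|N|`.** If `G` is a finite solvable group
and `N ⊴ G` with `|G:N| = n` and `kpp_G(N) = k`, then `|N| ≤ ∏_{i=0}^{nk-1} (nk-i)^(2^i)`. -/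
theorem card_normal_subgroup_solvable_le_of_primePow_G_classes
    {G : Type*} [Group G] [Finite G] (hsolv : IsSolvable G)
    (N : Subgroup G) (hN : N.Normal) (n k : ℕ) (hidx : N.index = n)
    (hk : {C : Set G | ∃ x : G, x ∈ N ∧ (∃ p m : ℕ, p.Prime ∧ orderOf x = p ^ m) ∧
        C = conjugatesOf x}.ncard = k) :
    Nat.card N ≤ ∏ i ∈ Finset.range (n * k), (n * k - i) ^ 2 ^ i := by
  have : Group.IsSolvable G := hsolv
  have hk' : (ConjClasses.mk '' {x : G | x ∈ N ∧ HasPrimePowerOrder x}).ncard = k := by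
    rw [← hk, ← ncard_setOf_conjugatesOf_eq]
    simp only [and_assoc, HasPrimePowerOrder]
  have hclasses : (primePowerOrderClasses N).ncard ≤ n * k :=
    hidx ▸ hk' ▸ ncard_primePowerOrderClasses_le_index_mul N
  exact (card_le_kppBound N).trans (kppBound_mono hclasses)
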